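/- Let n be odd and square-free with prime factorization n = p₁⋯p_K, identify Z_n ≅ Z_{p₁} × ⋯ × Z_{p_K}, and for each j let σⱼ be an arbitrary permutation of Z_{p_j}. Then the product permutation σ = σ₁ × ⋯ × σ_K of Z_n preserves quasi-independence: for every E ⊆ Z_n, E is quasi-independent as a subset of the n-th roots of unity if and only if σ(E) is. -/

import Mathlib

open scoped BigOperators

def QuasiIndep (S : Set ℂ) : Prop :=
  ∀ (s : Finset ℂ) (ε : ℂ → ℤ), ↑s ⊆ S →
    (∀ z ∈ s, ε z = 0 ∨ ε z = 1 ∨ ε z = -1) →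
    (∑ z ∈ s, (ε z : ℂ) * z) = 0 → ∀ z ∈ s, ε z = 0

/-- The identification of `∏_{p ∣ n} Z_p` (CRT decomposition of `Z_n` for squarefree `n`)
with the n-th roots of unity. -/
noncomputable def embCRT (n : ℕ) (x : ∀ p : n.primeFactors, ZMod (p : ℕ)) : ℂ :=
  ∏ p : n.primeFactors, Complex.exp (2 * Real.pi * Complex.I * ((x p).val) / (p : ℕ))

namespace QIAux

instance (n : ℕ) (p : n.primeFactors) : NeZero (p : ℕ) :=
  ⟨(Nat.prime_of_mem_primeFactors p.2).pos.ne'⟩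

instance (n : ℕ) (p : n.primeFactors) : Fact (Nat.Prime (p : ℕ)) :=
  ⟨Nat.prime_of_mem_primeFactors p.2⟩

/-- the p-th root character -/
noncomputable def ch (p : ℕ) (v : ZMod p) : ℂ :=
  Complex.exp (2 * Real.pi * Complex.I * v.val / p)

noncomputable def zeta (n : ℕ) : ℂ := Complex.exp (2 * Real.pi * Complex.I / n)

lemma embCRT_eq {n : ℕ} (x : ∀ p : n.primeFactors, ZMod (p : ℕ)) :
    embCRT n x = ∏ p : n.primeFactors, ch (p : ℕ) (x p) := rfl

lemma ch_eq_pow (p : ℕ) (v : ZMod p) :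
    ch p v = Complex.exp (2 * Real.pi * Complex.I / p) ^ (v.val) := by
  rw [ch, ← Complex.exp_nat_mul]
  ring_nf

lemma ch_add {p : ℕ} [NeZero p] (u v : ZMod p) : ch p (u + v) = ch p u * ch p v := by
  have hp : (p : ℕ) ≠ 0 := NeZero.ne p
  have hprim : IsPrimitiveRoot (Complex.exp (2 * Real.pi * Complex.I / p)) p :=
    Complex.isPrimitiveRoot_exp p hp
  rw [ch_eq_pow, ch_eq_pow, ch_eq_pow, ← pow_add]
  set ζ := Complex.exp (2 * Real.pi * Complex.I / p)
  have h1 : ζ ^ (p : ℕ) = 1 := hprim.pow_eq_one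
  have h2 : (u + v).val = (u.val + v.val) % p := by
    rw [ZMod.val_add]
  rw [h2]
  conv_rhs => rw [← Nat.mod_add_div (u.val + v.val) p]
  rw [pow_add, pow_mul, h1, one_pow, mul_one]

lemma sum_ch {p : ℕ} (hp : p.Prime) [NeZero p] : ∑ v : ZMod p, ch p v = 0 := by
  have hprim : IsPrimitiveRoot (Complex.exp (2 * Real.pi * Complex.I / p)) p :=
    Complex.isPrimitiveRoot_exp p hp.pos.ne'
  have := hprim.geom_sum_eq_zero hp.one_lt
  rw [← this]
  rw [Finset.sum_congr rfl (fun v _ => ch_eq_pow p v)]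
  apply Finset.sum_nbij' (fun v : ZMod p => v.val) (fun i : ℕ => (i : ZMod p))
  · intro v _; exact Finset.mem_range.2 (ZMod.val_lt v)
  · intros; exact Finset.mem_univ _
  · intro v _; exact ZMod.natCast_zmod_val v
  · intro i hi; exact ZMod.val_cast_of_lt (Finset.mem_range.1 hi)
  · intro v _; rfl

variable {n : ℕ}

lemma embCRT_add (x y : ∀ p : n.primeFactors, ZMod (p : ℕ)) :
    embCRT n (x + y) = embCRT n x * embCRT n y := by
  rw [embCRT_eq, embCRT_eq, embCRT_eq, ← Finset.prod_mul_distrib]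
  exact Finset.prod_congr rfl fun p _ => ch_add (x p) (y p)

def Cnat (x : ∀ p : n.primeFactors, ZMod (p : ℕ)) : ℕ :=
  ∑ p : n.primeFactors, (x p).val * (n / (p : ℕ))

lemma ch_eq_zeta_pow (hn : n ≠ 0) (p : n.primeFactors) (v : ZMod (p : ℕ)) :
    ch (p : ℕ) v = zeta n ^ (v.val * (n / (p : ℕ))) := by
  have hp : (p : ℕ) ∣ n := Nat.dvd_of_mem_primeFactors p.2
  have hp0 : ((p : ℕ) : ℂ) ≠ 0 := Nat.cast_ne_zero.2 (NeZero.ne _)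
  have hn0 : ((n : ℕ) : ℂ) ≠ 0 := Nat.cast_ne_zero.2 hn
  rw [zeta, ← Complex.exp_nat_mul, ch]
  congr 1
  have hcast : ((n / (p : ℕ) : ℕ) : ℂ) * (p : ℕ) = (n : ℂ) := by
    rw [← Nat.cast_mul, Nat.div_mul_cancel hp]
  push_cast
  field_simp
  rw [← hcast]
  ring

lemma embCRT_eq_zeta_pow (hn : n ≠ 0) (x : ∀ p : n.primeFactors, ZMod (p : ℕ)) :
    embCRT n x = zeta n ^ Cnat x := by
  rw [embCRT_eq, Cnat, ← Finset.prod_pow_eq_pow_sum]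
  exact Finset.prod_congr rfl fun p _ => ch_eq_zeta_pow hn p (x p)

noncomputable def cmap (x : ∀ p : n.primeFactors, ZMod (p : ℕ)) : ZMod n := (Cnat x : ZMod n)

lemma prime_dvd_div {p q : n.primeFactors} (hne : p ≠ q) : (p : ℕ) ∣ n / (q : ℕ) := by
  have hq : (q : ℕ) ∣ n := Nat.dvd_of_mem_primeFactors q.2
  have hp : (p : ℕ) ∣ n := Nat.dvd_of_mem_primeFactors p.2
  have hpp : Nat.Prime (p : ℕ) := Nat.prime_of_mem_primeFactors p.2
  have hqp : Nat.Prime (q : ℕ) := Nat.prime_of_mem_primeFactors q.2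
  have hmul : (q : ℕ) * (n / (q : ℕ)) = n := Nat.mul_div_cancel' hq
  have : (p : ℕ) ∣ (q : ℕ) * (n / (q : ℕ)) := by rw [hmul]; exact hp
  rcases (Nat.Prime.dvd_mul hpp).1 this with h | h
  · exact absurd (Subtype.ext ((Nat.prime_dvd_prime_iff_eq hpp hqp).1 h)) hne
  · exact h

lemma not_dvd_div_self (hsf : Squarefree n) (p : n.primeFactors) : ¬ (p : ℕ) ∣ n / (p : ℕ) := by
  intro h
  have hp : (p : ℕ) ∣ n := Nat.dvd_of_mem_primeFactors p.2
  have hmul : (p : ℕ) * (n / (p : ℕ)) = n := Nat.mul_div_cancel' hp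
  have : (p : ℕ) * (p : ℕ) ∣ n := by
    rcases h with ⟨c, hc⟩
    exact ⟨c, by calc n = (p : ℕ) * (n / (p : ℕ)) := hmul.symm
                  _ = (p : ℕ) * ((p : ℕ) * c) := by rw [hc]
                  _ = (p : ℕ) * (p : ℕ) * c := (mul_assoc _ _ _).symm⟩
  exact (Nat.prime_of_mem_primeFactors p.2).not_isUnit (hsf _ this)

lemma Cnat_mod_p (hn : n ≠ 0) (x : ∀ p : n.primeFactors, ZMod (p : ℕ)) (p : n.primeFactors) :
    ((Cnat x : ℕ) : ZMod (p : ℕ)) = x p * ((n / (p : ℕ) : ℕ) : ZMod (p : ℕ)) := by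
  rw [Cnat, Nat.cast_sum]
  rw [Fintype.sum_eq_single p]
  · push_cast [ZMod.natCast_zmod_val]
    rfl
  · intro q hq
    push_cast
    rw [(ZMod.natCast_eq_zero_iff _ _).2 (prime_dvd_div hq.symm)]
    ring

lemma cmap_surjective (hn : n ≠ 0) (hsf : Squarefree n) :
    Function.Surjective (cmap (n := n)) := by
  intro k
  set x : ∀ p : n.primeFactors, ZMod (p : ℕ) :=
    fun p => (k.val : ZMod (p : ℕ)) * ((n / (p : ℕ) : ℕ) : ZMod (p : ℕ))⁻¹ with hx
  refine ⟨x, ?_⟩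
  have key : ∀ p : n.primeFactors, ((p : ℕ) : ℤ) ∣ (Cnat x : ℤ) - (k.val : ℤ) := by
    intro p
    have h1 : ((Cnat x : ℕ) : ZMod (p : ℕ)) = ((k.val : ℕ) : ZMod (p : ℕ)) := by
      rw [Cnat_mod_p hn x p, hx]
      have hne : ((n / (p : ℕ) : ℕ) : ZMod (p : ℕ)) ≠ 0 := by
        rw [Ne, ZMod.natCast_eq_zero_iff]
        exact not_dvd_div_self hsf p
      field_simp
    have h2 : (Cnat x) ≡ k.val [MOD (p : ℕ)] := (ZMod.natCast_eq_natCast_iff _ _ _).1 h1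
    have := (Nat.modEq_iff_dvd (n := (p : ℕ))).1 h2
    exact (dvd_sub_comm).1 this
  have hdvd : (n : ℤ) ∣ (Cnat x : ℤ) - (k.val : ℤ) := by
    have hprod : ∏ p ∈ n.primeFactors, p = n := Nat.prod_primeFactors_of_squarefree hsf
    have : ∏ p ∈ n.primeFactors, p ∣ ((Cnat x : ℤ) - (k.val : ℤ)).natAbs := by
      refine Finset.prod_primes_dvd _ ?_ ?_
      · intro p hp; exact (Nat.prime_of_mem_primeFactors hp).prime
      · intro p hp
        rw [← Int.natAbs_natCast p, Int.natAbs_dvd_natAbs]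
        exact key ⟨p, hp⟩
    rw [hprod] at this
    exact Int.natAbs_dvd_natAbs.1 (by rwa [Int.natAbs_natCast])
  haveI : NeZero n := ⟨hn⟩
  have : (Cnat x : ZMod n) = (k.val : ZMod n) := by
    rw [ZMod.natCast_eq_natCast_iff]
    exact (Nat.modEq_iff_dvd).2 (dvd_sub_comm.mp hdvd)
  rw [cmap, this, ZMod.natCast_zmod_val]

lemma zeta_pow_mod (hn : n ≠ 0) (m : ℕ) : zeta n ^ m = zeta n ^ (m % n) := by
  have hζ : IsPrimitiveRoot (zeta n) n := Complex.isPrimitiveRoot_exp n hn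
  conv_lhs => rw [← Nat.mod_add_div m n]
  rw [pow_add, pow_mul, hζ.pow_eq_one, one_pow, mul_one]

lemma embCRT_injective (hn : n ≠ 0) (hsf : Squarefree n) :
    Function.Injective (embCRT n) := by
  haveI : NeZero n := ⟨hn⟩
  have hζ : IsPrimitiveRoot (zeta n) n := Complex.isPrimitiveRoot_exp n hn
  have hcard : Fintype.card (∀ p : n.primeFactors, ZMod (p : ℕ)) = Fintype.card (ZMod n) := by
    rw [Fintype.card_pi, ZMod.card]
    calc (∏ p : n.primeFactors, Fintype.card (ZMod (p : ℕ)))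
        = ∏ p : n.primeFactors, (p : ℕ) := by
          exact Finset.prod_congr rfl fun p _ => ZMod.card (p : ℕ)
      _ = ∏ p ∈ n.primeFactors, p := Finset.prod_coe_sort n.primeFactors (fun p => p)
      _ = n := Nat.prod_primeFactors_of_squarefree hsf
  have hcinj : Function.Injective (cmap (n := n)) :=
    ((Fintype.bijective_iff_surjective_and_card _).2
      ⟨cmap_surjective hn hsf, hcard⟩).1
  intro x y hxy
  apply hcinj
  have hpow : zeta n ^ Cnat x = zeta n ^ Cnat y := by
    rw [← embCRT_eq_zeta_pow hn, ← embCRT_eq_zeta_pow hn, hxy]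
  have hmod : Cnat x ≡ Cnat y [MOD n] := by
    rw [zeta_pow_mod hn, zeta_pow_mod hn (Cnat y)] at hpow
    exact hζ.pow_inj (Nat.mod_lt _ (Nat.pos_of_ne_zero hn))
      (Nat.mod_lt _ (Nat.pos_of_ne_zero hn)) hpow
  rw [cmap, cmap]
  exact (ZMod.natCast_eq_natCast_iff _ _ _).2 hmod

end QIAux

namespace QIAux

variable {n : ℕ}

lemma sum_mul_emb_eq_zero (j : n.primeFactors) (F : (∀ p : n.primeFactors, ZMod (p : ℕ)) → ℂ)
    (hF : ∀ (a : ZMod (j : ℕ)) x, F (Function.update x j a) = F x) :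
    ∑ x, F x * embCRT n x = 0 := by
  classical
  set e := (Equiv.piSplitAt j (fun p : n.primeFactors => ZMod (p : ℕ))).symm with he
  rw [← Equiv.sum_comp e (fun x => F x * embCRT n x)]
  rw [Fintype.sum_prod_type]
  rw [Finset.sum_comm]
  apply Finset.sum_eq_zero
  intro r _
  have hupd : ∀ a : ZMod (j : ℕ), e (a, r) = Function.update (e (0, r)) j a := by
    intro a
    funext i
    by_cases hi : i = j
    · subst hi
      simp [he, Equiv.piSplitAt, Function.update_self]
    · simp [he, Equiv.piSplitAt, hi, Function.update_of_ne hi]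
  have hFe : ∀ a : ZMod (j : ℕ), F (e (a, r)) = F (e (0, r)) := by
    intro a
    rw [hupd a, hF a]
  have hembe : ∀ a : ZMod (j : ℕ), embCRT n (e (a, r)) =
      ch (j : ℕ) a * ∏ i ∈ Finset.univ.erase j, ch (i : ℕ) ((e (0, r)) i) := by
    intro a
    rw [embCRT_eq, ← Finset.mul_prod_erase Finset.univ _ (Finset.mem_univ j)]
    congr 1
    · congr 1
      simp [he, Equiv.piSplitAt]
    · apply Finset.prod_congr rfl
      intro i hi
      have hij : i ≠ j := (Finset.mem_erase.1 hi).1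
      congr 1
      simp [he, Equiv.piSplitAt, hij]
  calc ∑ a : ZMod (j : ℕ), F (e (a, r)) * embCRT n (e (a, r))
      = ∑ a : ZMod (j : ℕ), (F (e (0, r)) * ∏ i ∈ Finset.univ.erase j, ch (i : ℕ) ((e (0, r)) i)) * ch (j : ℕ) a := by
        apply Finset.sum_congr rfl
        intro a _
        rw [hFe a, hembe a]
        ring
    _ = (F (e (0, r)) * ∏ i ∈ Finset.univ.erase j, ch (i : ℕ) ((e (0, r)) i)) * ∑ a : ZMod (j : ℕ), ch (j : ℕ) a := by
        rw [Finset.mul_sum]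
    _ = 0 := by
        rw [sum_ch (Nat.prime_of_mem_primeFactors j.2), mul_zero]

def mask (b x : ∀ p : n.primeFactors, ZMod (p : ℕ)) (S : Finset {p : ℕ // p ∈ n.primeFactors}) :
    ∀ p : n.primeFactors, ZMod (p : ℕ) := fun i => if i ∈ S then b i else x i

def Gfun (b : ∀ p : n.primeFactors, ZMod (p : ℕ)) (f : (∀ p : n.primeFactors, ZMod (p : ℕ)) → ℤ)
    (x : ∀ p : n.primeFactors, ZMod (p : ℕ)) : ℤ :=
  ∑ S : Finset {p : ℕ // p ∈ n.primeFactors}, (-1) ^ S.card * f (mask b x S)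

lemma sum_G_mul_emb (b : ∀ p : n.primeFactors, ZMod (p : ℕ))
    (f : (∀ p : n.primeFactors, ZMod (p : ℕ)) → ℤ) :
    ∑ x, (Gfun b f x : ℂ) * embCRT n x = ∑ x, (f x : ℂ) * embCRT n x := by
  classical
  have step1 : ∑ x, (Gfun b f x : ℂ) * embCRT n x =
      ∑ S : Finset {p : ℕ // p ∈ n.primeFactors},
        (-1 : ℂ) ^ S.card * ∑ x, (f (mask b x S) : ℂ) * embCRT n x := by
    calc ∑ x, (Gfun b f x : ℂ) * embCRT n x
        = ∑ x, ∑ S : Finset {p : ℕ // p ∈ n.primeFactors},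
            ((-1 : ℂ) ^ S.card * (f (mask b x S) : ℂ)) * embCRT n x := by
          apply Finset.sum_congr rfl
          intro x _
          rw [Gfun]
          push_cast
          rw [Finset.sum_mul]
      _ = ∑ S : Finset {p : ℕ // p ∈ n.primeFactors}, ∑ x,
            ((-1 : ℂ) ^ S.card * (f (mask b x S) : ℂ)) * embCRT n x := Finset.sum_comm
      _ = _ := by
          apply Finset.sum_congr rfl
          intro S _
          rw [Finset.mul_sum]
          apply Finset.sum_congr rfl
          intro x _
          ring
  rw [step1]
  rw [Fintype.sum_eq_single (∅ : Finset {p : ℕ // p ∈ n.primeFactors})]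
  · simp only [Finset.card_empty, pow_zero, one_mul]
    apply Finset.sum_congr rfl
    intro x _
    have hm : mask b x ∅ = x := by funext i; simp [mask]
    rw [hm]
  · intro S hS
    obtain ⟨j, hj⟩ := Finset.nonempty_of_ne_empty hS
    have : ∑ x, (f (mask b x S) : ℂ) * embCRT n x = 0 := by
      apply sum_mul_emb_eq_zero j
      intro a x
      have hm : mask b (Function.update x j a) S = mask b x S := by
        funext i
        by_cases hiS : i ∈ S
        · simp [mask, hiS]
        · have hij : i ≠ j := fun h => hiS (h ▸ hj)
          simp [mask, hiS, Function.update_of_ne hij]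
      rw [hm]
    rw [this, mul_zero]

lemma G_eq_zero (b x : ∀ p : n.primeFactors, ZMod (p : ℕ))
    (f : (∀ p : n.primeFactors, ZMod (p : ℕ)) → ℤ)
    (j : n.primeFactors) (hj : x j = b j) : Gfun b f x = 0 := by
  classical
  apply Finset.sum_ninvolution (fun S => if j ∈ S then S.erase j else insert j S)
  · intro S
    by_cases hjS : j ∈ S
    · simp only [hjS, if_true]
      have hm : mask b x (S.erase j) = mask b x S := by
        funext i
        by_cases hij : i = j
        · subst hij; simp [mask, hjS, Finset.notMem_erase, hj]
        · simp [mask, Finset.mem_erase, hij]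
      have hc : (S.erase j).card + 1 = S.card := Finset.card_erase_add_one hjS
      rw [hm, ← hc, pow_succ]
      ring
    · simp only [hjS, if_false]
      have hm : mask b x (insert j S) = mask b x S := by
        funext i
        by_cases hij : i = j
        · subst hij; simp [mask, hjS, hj]
        · simp [mask, Finset.mem_insert, hij]
      have hc : (insert j S).card = S.card + 1 := Finset.card_insert_of_notMem hjS
      rw [hm, hc, pow_succ]
      ring
  · intro S _
    by_cases hjS : j ∈ S
    · simp only [hjS, if_true]
      intro h
      rw [← h] at hjS
      exact Finset.notMem_erase j S hjS
    · simp only [hjS, if_false]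
      intro h
      have := Finset.mem_insert_self j S
      rw [h] at this
      exact hjS this
  · intro S; exact Finset.mem_univ _
  · intro S
    by_cases hjS : j ∈ S
    · rw [if_pos hjS, if_neg (Finset.notMem_erase j S)]
      exact Finset.insert_erase hjS
    · rw [if_neg hjS, if_pos (Finset.mem_insert_self j S)]
      exact Finset.erase_insert hjS

end QIAux
namespace QIAux

variable {n : ℕ}

/-- the family of "primitive" CRT points -/
noncomputable def primFam (n : ℕ) (y : {x : ∀ p : n.primeFactors, ZMod (p : ℕ) // ∀ j, x j ≠ 0}) : ℂ :=
  embCRT n y.1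

lemma emb_mem_span (hn : n ≠ 0) :
    ∀ (k : ℕ) (x : ∀ p : n.primeFactors, ZMod (p : ℕ)),
      (Finset.univ.filter fun j => x j = 0).card = k →
      embCRT n x ∈ Submodule.span ℚ (Set.range (primFam n)) := by
  intro k
  induction k using Nat.strong_induction_on with
  | _ k ih =>
  intro x hk
  by_cases hx : ∀ j, x j ≠ 0
  · exact Submodule.subset_span ⟨⟨x, hx⟩, rfl⟩
  · push_neg at hx
    obtain ⟨j, hj⟩ := hx
    have hsum : ∑ a : ZMod (j : ℕ), embCRT n (Function.update x j a) = 0 := by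
      have key : ∀ a : ZMod (j : ℕ), embCRT n (Function.update x j a)
          = ch (j : ℕ) a * ∏ i ∈ Finset.univ.erase j, ch (i : ℕ) (x i) := by
        intro a
        rw [embCRT_eq, ← Finset.mul_prod_erase Finset.univ _ (Finset.mem_univ j)]
        congr 1
        · rw [Function.update_self]
        · exact Finset.prod_congr rfl fun i hi => by
            rw [Function.update_of_ne (Finset.mem_erase.1 hi).1]
      rw [Finset.sum_congr rfl fun a _ => key a, ← Finset.sum_mul,
        sum_ch (Nat.prime_of_mem_primeFactors j.2), zero_mul]
    have hxupd : Function.update x j 0 = x := by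
      funext i; by_cases hi : i = j
      · subst hi; rw [Function.update_self, hj]
      · rw [Function.update_of_ne hi]
    have h0' : embCRT n (Function.update x j 0) + ∑ a ∈ Finset.univ.erase (0 : ZMod (j : ℕ)),
        embCRT n (Function.update x j a) = 0 := by
      rw [Finset.add_sum_erase Finset.univ
        (fun a => embCRT n (Function.update x j a)) (Finset.mem_univ 0)]
      exact hsum
    have h0 : embCRT n x + ∑ a ∈ Finset.univ.erase (0 : ZMod (j : ℕ)),
        embCRT n (Function.update x j a) = 0 := by
      rwa [hxupd] at h0' 
    have hx_eq : embCRT n x = - ∑ a ∈ Finset.univ.erase (0 : ZMod (j : ℕ)),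
        embCRT n (Function.update x j a) := eq_neg_of_add_eq_zero_left h0
    rw [hx_eq]
    apply Submodule.neg_mem
    apply Submodule.sum_mem
    intro a ha
    have ha0 : a ≠ 0 := (Finset.mem_erase.1 ha).1
    have hfilter : (Finset.univ.filter fun i => Function.update x j a i = 0)
        = (Finset.univ.filter fun i => x i = 0).erase j := by
      ext i
      simp only [Finset.mem_filter, Finset.mem_erase, Finset.mem_univ, true_and]
      by_cases hi : i = j
      · subst hi
        simp [Function.update_self, ha0]
      · simp [Function.update_of_ne hi, hi]
    have hjmem : j ∈ Finset.univ.filter (fun i => x i = 0) :=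
      Finset.mem_filter.2 ⟨Finset.mem_univ _, hj⟩
    have hkpos : 0 < k := by
      rw [← hk]
      exact Finset.card_pos.2 ⟨j, hjmem⟩
    have hcard : (Finset.univ.filter fun i => Function.update x j a i = 0).card = k - 1 := by
      rw [hfilter, Finset.card_erase_of_mem hjmem, hk]
    exact ih (k - 1) (Nat.sub_lt hkpos one_pos) _ hcard

lemma zeta_pow_mem_span (hn : n ≠ 0) (hsf : Squarefree n) (m : ℕ) :
    zeta n ^ m ∈ Submodule.span ℚ (Set.range (primFam n)) := by
  haveI : NeZero n := ⟨hn⟩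
  obtain ⟨x, hx⟩ := cmap_surjective hn hsf (m : ZMod n)
  have hmod : Cnat x ≡ m [MOD n] := by
    rw [cmap] at hx
    exact (ZMod.natCast_eq_natCast_iff _ _ _).1 hx
  have : zeta n ^ m = embCRT n x := by
    rw [embCRT_eq_zeta_pow hn, zeta_pow_mod hn m, zeta_pow_mod hn (Cnat x), hmod]
  rw [this]
  exact emb_mem_span hn _ x rfl

end QIAux
namespace QIAux

variable {n : ℕ}

lemma span_eq (hn : n ≠ 0) (hsf : Squarefree n) :
    Submodule.span ℚ (Set.range (primFam n)) =
      Subalgebra.toSubmodule (Algebra.adjoin ℚ {zeta n}) := by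
  apply le_antisymm
  · rw [Submodule.span_le]
    rintro z ⟨y, rfl⟩
    show primFam n y ∈ (Algebra.adjoin ℚ {zeta n} : Subalgebra ℚ ℂ)
    rw [primFam, embCRT_eq_zeta_pow hn]
    exact pow_mem (Algebra.subset_adjoin (Set.mem_singleton _)) _
  · rw [Algebra.adjoin_eq_span, Submodule.span_le]
    intro z hz
    rw [SetLike.mem_coe, Submonoid.mem_closure_singleton] at hz
    obtain ⟨m, hm⟩ := hz
    rw [← hm]
    exact zeta_pow_mem_span hn hsf m

lemma zeta_integral (hn : n ≠ 0) : IsIntegral ℚ (zeta n) := by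
  have hζ : IsPrimitiveRoot (zeta n) n := Complex.isPrimitiveRoot_exp n hn
  refine ⟨Polynomial.X ^ n - Polynomial.C 1, ?_, ?_⟩
  · exact Polynomial.monic_X_pow_sub_C 1 hn
  · simp [hζ.pow_eq_one]

lemma finrank_span (hn : n ≠ 0) (hsf : Squarefree n) :
    Module.finrank ℚ ↥(Submodule.span ℚ (Set.range (primFam n))) = n.totient := by
  rw [span_eq hn hsf]
  have hζ : IsPrimitiveRoot (zeta n) n := Complex.isPrimitiveRoot_exp n hn
  have hint := zeta_integral hn
  have h1 : (IntermediateField.adjoin ℚ {zeta n}).toSubalgebra = Algebra.adjoin ℚ {zeta n} :=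
    IntermediateField.adjoin_simple_toSubalgebra_of_isAlgebraic hint.isAlgebraic
  rw [← h1]
  have h2 : Module.finrank ℚ (IntermediateField.adjoin ℚ {zeta n}) =
      (minpoly ℚ (zeta n)).natDegree := IntermediateField.adjoin.finrank hint
  rw [← Polynomial.cyclotomic_eq_minpoly_rat hζ (Nat.pos_of_ne_zero hn),
    Polynomial.natDegree_cyclotomic] at h2
  exact h2

lemma card_prim (hn : n ≠ 0) (hsf : Squarefree n) :
    Fintype.card {x : ∀ p : n.primeFactors, ZMod (p : ℕ) // ∀ j, x j ≠ 0} = n.totient := by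
  classical
  have e := Equiv.subtypePiEquivPi
    (p := fun (j : n.primeFactors) (b : ZMod (j : ℕ)) => b ≠ 0)
  rw [Fintype.card_congr e, Fintype.card_pi]
  have hcard : ∀ p : n.primeFactors,
      Fintype.card {b : ZMod (p : ℕ) // b ≠ 0} = (p : ℕ) - 1 := by
    intro p
    rw [Fintype.card_subtype_compl, ZMod.card, Fintype.card_subtype_eq (0 : ZMod (p : ℕ))]
  rw [Finset.prod_congr rfl fun p _ => hcard p]
  have ht : n.totient = ∏ p ∈ n.primeFactors, (p - 1) := by
    rw [Nat.totient_eq_prod_factorization hn, Finsupp.prod, Nat.support_factorization]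
    apply Finset.prod_congr rfl
    intro p hp
    have h1 : n.factorization p = 1 := le_antisymm (hsf.natFactorization_le_one p)
      ((Nat.prime_of_mem_primeFactors hp).factorization_pos_of_dvd hn
        (Nat.dvd_of_mem_primeFactors hp))
    rw [h1]
    simp
  rw [ht]
  exact Finset.prod_coe_sort n.primeFactors (fun p => p - 1)

lemma prim_linearIndependent (hn : n ≠ 0) (hsf : Squarefree n) :
    LinearIndependent ℚ (primFam n) := by
  rw [linearIndependent_iff_card_eq_finrank_span]
  rw [card_prim hn hsf]
  rw [Set.finrank, finrank_span hn hsf]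

end QIAux
namespace QIAux

variable {n : ℕ}

lemma indep_zero (hn : n ≠ 0) (hsf : Squarefree n) (b : ∀ p : n.primeFactors, ZMod (p : ℕ))
    (g : (∀ p : n.primeFactors, ZMod (p : ℕ)) → ℤ)
    (hsupp : ∀ x, (∃ j, x j = b j) → g x = 0)
    (hsum : ∑ x, (g x : ℂ) * embCRT n x = 0) : ∀ x, g x = 0 := by
  classical
  set h : (∀ p : n.primeFactors, ZMod (p : ℕ)) → ℤ := fun y => g (y + b) with hh
  have hsupp' : ∀ y, (∃ j, y j = 0) → h y = 0 := by
    rintro y ⟨j, hj⟩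
    apply hsupp
    exact ⟨j, by simp [hj]⟩
  have hsum' : ∑ y, (h y : ℂ) * embCRT n y = 0 := by
    have hre : ∀ y : ∀ p : n.primeFactors, ZMod (p : ℕ),
        (h y : ℂ) * embCRT n y = ((g (y + b) : ℂ) * embCRT n (y + b)) * embCRT n (-b) := by
      intro y
      have hemb : embCRT n (y + b) * embCRT n (-b) = embCRT n y := by
        rw [← embCRT_add]
        congr 1
        abel
      rw [← hemb, hh]
      ring
    rw [Finset.sum_congr rfl fun y _ => hre y, ← Finset.sum_mul]
    have hre2 := Fintype.sum_equiv (Equiv.addRight b)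
      (fun y => ((g (y + b) : ℂ) * embCRT n (y + b)))
      (fun x => (g x : ℂ) * embCRT n x) (fun y => rfl)
    rw [hre2, hsum, zero_mul]
  have h1 : ∑ y ∈ Finset.univ.filter (fun x : ∀ p : n.primeFactors, ZMod (p : ℕ) => ∀ j, x j ≠ 0),
      (h y : ℂ) * embCRT n y = ∑ y, (h y : ℂ) * embCRT n y := by
    apply Finset.sum_filter_of_ne
    intro x _ hne j hj0
    apply hne
    rw [hsupp' x ⟨j, hj0⟩]
    simp
  have h2 : ∑ y : {x : ∀ p : n.primeFactors, ZMod (p : ℕ) // ∀ j, x j ≠ 0},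
      (h y.1 : ℂ) * embCRT n y.1 = 0 := by
    rw [← Finset.sum_subtype (Finset.univ.filter
        (fun x : ∀ p : n.primeFactors, ZMod (p : ℕ) => ∀ j, x j ≠ 0))
      (fun x => by simp) (fun y => (h y : ℂ) * embCRT n y)]
    rw [h1, hsum']
  have hz : ∀ y : {x : ∀ p : n.primeFactors, ZMod (p : ℕ) // ∀ j, x j ≠ 0},
      ((h y.1 : ℚ)) = 0 := by
    apply Fintype.linearIndependent_iff.1 (prim_linearIndependent hn hsf)
      (fun y => (h y.1 : ℚ))
    rw [← h2]
    apply Finset.sum_congr rfl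
    intro y _
    rw [Rat.smul_def, primFam]
    norm_cast
  intro x
  by_cases hx : ∃ j, x j = b j
  · exact hsupp x hx
  · push_neg at hx
    have hy : ∀ j, (x - b) j ≠ 0 := by
      intro j h0
      exact hx j (sub_eq_zero.1 h0)
    have hxb : h (x - b) = g x := by
      rw [hh]
      simp
    have := hz ⟨x - b, hy⟩
    rw [hxb] at this
    exact_mod_cast this

end QIAux
namespace QIAux

variable {n : ℕ}

lemma ker_iff (hn : n ≠ 0) (hsf : Squarefree n) (b : ∀ p : n.primeFactors, ZMod (p : ℕ))
    (f : (∀ p : n.primeFactors, ZMod (p : ℕ)) → ℤ) :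
    (∑ x, (f x : ℂ) * embCRT n x = 0) ↔ ∀ x, Gfun b f x = 0 := by
  constructor
  · intro hsum x
    have hGsum : ∑ x, (Gfun b f x : ℂ) * embCRT n x = 0 := by
      rw [sum_G_mul_emb]; exact hsum
    exact indep_zero hn hsf b (Gfun b f)
      (fun x hx => hx.elim (fun j hj => G_eq_zero b x f j hj)) hGsum x
  · intro hG
    rw [← sum_G_mul_emb b f]
    simp [hG]

lemma T_injective (σ : ∀ p : n.primeFactors, Equiv.Perm (ZMod (p : ℕ))) :
    Function.Injective (fun (x : ∀ p : n.primeFactors, ZMod (p : ℕ)) => fun p => σ p (x p)) := by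
  intro u v huv
  funext p
  have := congrFun huv p
  exact (σ p).injective this

lemma qi_image (hn : 2 ≤ n) (hsf : Squarefree n)
    (σ : ∀ p : n.primeFactors, Equiv.Perm (ZMod (p : ℕ)))
    (E : Set (∀ p : n.primeFactors, ZMod (p : ℕ)))
    (hQI : QuasiIndep (embCRT n '' E)) :
    QuasiIndep (embCRT n '' ((fun x => fun p => σ p (x p)) '' E)) := by
  classical
  have hn0 : n ≠ 0 := by omega
  have hinj : Function.Injective (embCRT n) := embCRT_injective hn0 hsf
  intro s ε hsub hval hsum
  set T : (∀ p : n.primeFactors, ZMod (p : ℕ)) → (∀ p : n.primeFactors, ZMod (p : ℕ)) :=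
    fun x => fun p => σ p (x p) with hT
  set f : (∀ p : n.primeFactors, ZMod (p : ℕ)) → ℤ :=
    fun x => if embCRT n x ∈ s then ε (embCRT n x) else 0 with hf
  have hsum1 : ∑ x, (f x : ℂ) * embCRT n x = 0 := by
    rw [← hsum]
    have hstep : ∑ x, (f x : ℂ) * embCRT n x
        = ∑ x ∈ Finset.univ.filter (fun x => embCRT n x ∈ s),
            (ε (embCRT n x) : ℂ) * embCRT n x := by
      rw [Finset.sum_filter]
      apply Finset.sum_congr rfl
      intro x _
      by_cases hx : embCRT n x ∈ s <;> simp [hf, hx]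
    rw [hstep]
    apply Finset.sum_bij (fun x _ => embCRT n x)
    · intro a ha; exact (Finset.mem_filter.1 ha).2
    · intro a _ b _ hab; exact hinj hab
    · intro z hz
      obtain ⟨x, _, hxz⟩ := hsub hz
      exact ⟨x, Finset.mem_filter.2 ⟨Finset.mem_univ _, hxz ▸ hz⟩, hxz⟩
    · intro a _; rfl
  have hG0 : ∀ x, Gfun 0 f x = 0 := (ker_iff hn0 hsf 0 f).1 hsum1
  set f' : (∀ p : n.primeFactors, ZMod (p : ℕ)) → ℤ := fun y => f (T y) with hf'
  set b' : ∀ p : n.primeFactors, ZMod (p : ℕ) := fun p => (σ p).symm 0 with hb'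
  have hG' : ∀ x, Gfun b' f' x = 0 := by
    intro x
    have hmask : ∀ S, T (mask b' x S) = mask 0 (T x) S := by
      intro S; funext i
      by_cases hi : i ∈ S
      · simp [hT, mask, hb', hi]
      · simp [hT, mask, hi]
    have : Gfun b' f' x = Gfun 0 f (T x) := by
      rw [Gfun, Gfun]
      apply Finset.sum_congr rfl
      intro S _
      rw [hf']
      simp only []
      rw [hmask S]
    rw [this]
    exact hG0 (T x)
  have hsum2 : ∑ y, (f' y : ℂ) * embCRT n y = 0 := (ker_iff hn0 hsf b' f').2 hG'
  -- f' is supported on E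
  have hsuppE : ∀ y, f' y ≠ 0 → y ∈ E := by
    intro y hy
    have hms : embCRT n (T y) ∈ s := by
      by_contra hms
      apply hy
      show f (T y) = 0
      show (if embCRT n (T y) ∈ s then ε (embCRT n (T y)) else 0) = 0
      rw [if_neg hms]
    obtain ⟨w, hwTE, hw⟩ := hsub hms
    have hwy : w = T y := hinj hw
    rw [hwy] at hwTE
    obtain ⟨u, huE, hu⟩ := hwTE
    have huy : u = y := T_injective σ hu
    rwa [← huy]
  set s' : Finset ℂ := (Finset.univ.filter (fun y => f' y ≠ 0)).image (embCRT n) with hs'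
  set ε' : ℂ → ℤ := fun z =>
    if hz : z ∈ Set.range (embCRT n) then f' (Function.invFun (embCRT n) z) else 0 with hε'
  have hεemb : ∀ y, ε' (embCRT n y) = f' y := by
    intro y
    have hmem : embCRT n y ∈ Set.range (embCRT n) := ⟨y, rfl⟩
    show (if _ : embCRT n y ∈ Set.range (embCRT n) then
        f' (Function.invFun (embCRT n) (embCRT n y)) else 0) = f' y
    rw [dif_pos hmem, Function.leftInverse_invFun hinj y]
  have hall : ∀ y, f' y = 0 := by
    have happ := hQI s' ε' ?_ ?_ ?_
    · intro y
      by_contra hy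
      have hmem : embCRT n y ∈ s' :=
        Finset.mem_image.2 ⟨y, Finset.mem_filter.2 ⟨Finset.mem_univ _, hy⟩, rfl⟩
      have := happ _ hmem
      rw [hεemb y] at this
      exact hy this
    · intro z hz
      obtain ⟨y, hy, rfl⟩ := Finset.mem_image.1 hz
      have hy' : f' y ≠ 0 := (Finset.mem_filter.1 hy).2
      exact ⟨y, hsuppE y hy', rfl⟩
    · intro z hz
      obtain ⟨y, hy, rfl⟩ := Finset.mem_image.1 hz
      rw [hεemb y]
      have hms : embCRT n (T y) ∈ s := by
        by_contra hms
        apply (Finset.mem_filter.1 hy).2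
        show f (T y) = 0
        show (if embCRT n (T y) ∈ s then ε (embCRT n (T y)) else 0) = 0
        rw [if_neg hms]
      show (if embCRT n (T y) ∈ s then ε (embCRT n (T y)) else 0) = 0 ∨
        (if embCRT n (T y) ∈ s then ε (embCRT n (T y)) else 0) = 1 ∨
        (if embCRT n (T y) ∈ s then ε (embCRT n (T y)) else 0) = -1
      rw [if_pos hms]
      exact hval _ hms
    · have hbij : ∑ z ∈ s', (ε' z : ℂ) * z
          = ∑ y ∈ Finset.univ.filter (fun y => f' y ≠ 0), (f' y : ℂ) * embCRT n y := by
        symm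
        apply Finset.sum_bij (fun y _ => embCRT n y)
        · intro a ha
          exact Finset.mem_image.2 ⟨a, ha, rfl⟩
        · intro a _ b _ hab; exact hinj hab
        · intro z hz
          obtain ⟨y, hy, rfl⟩ := Finset.mem_image.1 hz
          exact ⟨y, hy, rfl⟩
        · intro a _
          rw [hεemb a]
      rw [hbij, Finset.sum_filter_of_ne, hsum2]
      intro y _ hy hy0
      apply hy
      rw [hy0]
      simp
  -- conclude
  intro z hz
  obtain ⟨x, _, hxz⟩ := hsub hz
  have hfx : f x = ε z := by
    show (if embCRT n x ∈ s then ε (embCRT n x) else 0) = ε z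
    rw [hxz, if_pos hz]
  obtain ⟨y, hy⟩ : ∃ y, T y = x :=
    ⟨fun p => (σ p).symm (x p), by funext p; show σ p ((σ p).symm (x p)) = x p; simp⟩
  have hTy : f (T y) = 0 := hall y
  rw [hy, hfx] at hTy
  exact hTy

end QIAux

theorem stmt_13 (n : ℕ) (hn : 2 ≤ n) (hsf : Squarefree n) (hodd : Odd n)
    (σ : ∀ p : n.primeFactors, Equiv.Perm (ZMod (p : ℕ)))
    (E : Set (∀ p : n.primeFactors, ZMod (p : ℕ))) :
    QuasiIndep (embCRT n '' E) ↔
      QuasiIndep (embCRT n '' ((fun x => fun p => σ p (x p)) '' E)) := by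
  constructor
  · exact QIAux.qi_image hn hsf σ E
  · intro h
    have h2 := QIAux.qi_image hn hsf (fun p => (σ p).symm) _ h
    have himg : ((fun x => fun p => (σ p).symm (x p)) ''
        ((fun x => fun p => σ p (x p)) '' E)) = E := by
      ext u
      constructor
      · rintro ⟨v, ⟨w, hwE, rfl⟩, rfl⟩
        simpa using hwE
      · intro hu
        exact ⟨fun p => σ p (u p), ⟨u, hu, rfl⟩, by funext p; simp⟩
    rwa [himg] at h2
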